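/- arXiv:2403.09951 — 2 statements merged into one kernel-verified Lean document; each statement's English description precedes it below -/
import Mathlib

section
/- For the SO(n) AKLT transfer operator E₁(B) = (1/n)·Σᵢ γᵢ B γᵢ on the Clifford algebra C_n, each basis element γ_I is an eigenvector with eigenvalue λ_I = (−1)^{|I|}·(n − 2|I|)/n; in particular E₁(1) = 1, and for n even E₁(γ₀) = −γ₀, while |λ_I| < 1 for all 0 < |I| < n. -/
open Matrix

/-- The ordered product `γ_I` over the increasingly-sorted multi-index `I`. -/
noncomputable def gammaProd {n N : ℕ} (γ : Fin n → Matrix (Fin N) (Fin N) ℂ)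
    (I : Finset (Fin n)) : Matrix (Fin N) (Fin N) ℂ :=
  ((I.sort (· ≤ ·)).map γ).prod

/-- The normalized top product `γ₀`, with prefactor `i` when `n ≡ 2,3 mod 4`. -/
noncomputable def gamma0 {n N : ℕ} (γ : Fin n → Matrix (Fin N) (Fin N) ℂ) :
    Matrix (Fin N) (Fin N) ℂ :=
  (if n % 4 = 2 ∨ n % 4 = 3 then Complex.I else 1) • (List.ofFn γ).prod

/-- The SO(n) AKLT transfer operator `E₁(B) = (1/n) Σᵢ γᵢ B γᵢ`. -/
noncomputable def transferE1 {n N : ℕ} (γ : Fin n → Matrix (Fin N) (Fin N) ℂ)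
    (B : Matrix (Fin N) (Fin N) ℂ) : Matrix (Fin N) (Fin N) ℂ :=
  (n : ℂ)⁻¹ • ∑ i : Fin n, γ i * B * γ i

/-!
Since `γᵢ² = 1`, conjugation `B ↦ γᵢ B γᵢ` is multiplicative; it fixes `γᵢ` and negates every
`γⱼ` with `j ≠ i`. Hence `γᵢ γ_I γᵢ = (-1)^|I| γ_I` for `i ∉ I` and `-(-1)^|I| γ_I` for `i ∈ I`,
and averaging over the `n - |I|` indices outside `I` and the `|I|` inside gives the eigenvalue
`(-1)^|I| (n - 2|I|)/n`. The top product `γ₀` is a scalar multiple of `γ_I` for `I` the full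
index set, whose eigenvalue is `-1` when `n` is even.
-/

theorem List.mul_prod_mul_of_mul_self {M : Type*} [Monoid M] {a : M} (ha : a * a = 1) :
    ∀ L : List M, a * L.prod * a = (L.map fun x => a * x * a).prod
  | [] => by simpa using ha
  | x :: L => by
    rw [List.map_cons, List.prod_cons, List.prod_cons, ← List.mul_prod_mul_of_mul_self ha L]
    calc a * (x * L.prod) * a = a * x * (a * a) * L.prod * a := by
          rw [ha, mul_one]; simp only [mul_assoc]
      _ = a * x * a * (a * L.prod * a) := by simp only [mul_assoc]

theorem List.prod_map_smul {ι R A : Type*} [CommMonoid R] [Monoid A] [MulAction R A]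
    [IsScalarTower R A A] [SMulCommClass R A A] (c : ι → R) (f : ι → A) :
    ∀ L : List ι, (L.map fun j => c j • f j).prod = (L.map c).prod • (L.map f).prod
  | [] => by simp
  | j :: L => by
    simp only [List.map_cons, List.prod_cons, List.prod_map_smul c f L, smul_mul_smul_comm]

theorem Finset.prod_map_sort {ι M : Type*} [LinearOrder ι] [CommMonoid M] (I : Finset ι)
    (c : ι → M) : ((I.sort (· ≤ ·)).map c).prod = ∏ j ∈ I, c j := by
  rw [Finset.prod_eq_multiset_prod, ← Finset.sort_eq I (· ≤ ·), Multiset.map_coe,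
    Multiset.prod_coe]

theorem Finset.sum_ite_mem_neg_one_one {ι R : Type*} [Fintype ι] [DecidableEq ι] [CommRing R]
    (I : Finset ι) : ∑ i : ι, (if i ∈ I then (-1 : R) else 1) = Fintype.card ι - 2 * I.card := by
  rw [Finset.sum_ite, Finset.sum_const, Finset.sum_const, Finset.filter_mem_eq_inter,
    Finset.univ_inter, Finset.filter_not, Finset.filter_mem_eq_inter, Finset.univ_inter,
    ← Finset.compl_eq_univ_sdiff, Finset.card_compl, nsmul_eq_mul, nsmul_eq_mul,
    Nat.cast_sub I.card_le_univ]
  ring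

theorem norm_neg_one_pow_mul_sub_two_mul_div_lt_one {n k : ℕ} (hk : 0 < k) (hkn : k < n) :
    ‖(-1 : ℂ) ^ k * ((n : ℂ) - 2 * k) / n‖ < 1 := by
  have hn : (0 : ℝ) < n := by exact_mod_cast hk.trans hkn
  have hk' : (1 : ℝ) ≤ k := by exact_mod_cast hk
  have hkn' : (k : ℝ) + 1 ≤ n := by exact_mod_cast hkn
  have hreal : (n : ℂ) - 2 * k = ((n - 2 * k : ℝ) : ℂ) := by push_cast; ring
  rw [hreal, norm_div, norm_mul, norm_pow, norm_neg, norm_one, one_pow, one_mul,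
    Complex.norm_real, Real.norm_eq_abs, Complex.norm_natCast, div_lt_one hn, abs_lt]
  constructor <;> linarith

section TransferOperator

variable {n N : ℕ} (γ : Fin n → Matrix (Fin N) (Fin N) ℂ)

theorem gammaProd_empty : gammaProd γ ∅ = 1 := by
  simp [gammaProd]

theorem gamma0_eq_smul_gammaProd_univ :
    gamma0 γ = (if n % 4 = 2 ∨ n % 4 = 3 then Complex.I else 1) • gammaProd γ Finset.univ := by
  rw [gamma0, gammaProd, Fin.sort_univ, List.ofFn_eq_map]

theorem transferE1_smul (c : ℂ) (B : Matrix (Fin N) (Fin N) ℂ) :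
    transferE1 γ (c • B) = c • transferE1 γ B := by
  simp only [transferE1, Matrix.mul_smul, Matrix.smul_mul, ← Finset.smul_sum, smul_comm c]

variable {γ}
  (hrel : ∀ i j, γ i * γ j + γ j * γ i =
    if i = j then (2 : ℂ) • (1 : Matrix (Fin N) (Fin N) ℂ) else 0)
include hrel

theorem gamma_mul_self (i : Fin n) : γ i * γ i = 1 := by
  have h := hrel i i
  rw [if_pos rfl, ← two_smul ℂ] at h
  exact smul_right_injective _ two_ne_zero h

theorem gamma_anticomm {i j : Fin n} (hij : i ≠ j) : γ i * γ j = -(γ j * γ i) := by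
  have h := hrel i j
  rw [if_neg hij] at h
  exact eq_neg_of_add_eq_zero_left h

theorem gamma_mul_gamma_mul_gamma (i j : Fin n) :
    γ i * γ j * γ i = -(if j = i then -1 else 1 : ℂ) • γ j := by
  by_cases hji : j = i
  · subst hji
    rw [gamma_mul_self hrel, one_mul, if_pos rfl, neg_neg, one_smul]
  · rw [gamma_anticomm hrel (Ne.symm hji), neg_mul, mul_assoc, gamma_mul_self hrel, mul_one,
      if_neg hji, neg_smul, one_smul]

theorem gamma_mul_gammaProd_mul_gamma (i : Fin n) (I : Finset (Fin n)) :
    γ i * gammaProd γ I * γ i = ((-1) ^ I.card * if i ∈ I then -1 else 1 : ℂ) • gammaProd γ I := by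
  rw [gammaProd, List.mul_prod_mul_of_mul_self (gamma_mul_self hrel i), List.map_map]
  have hconj : (fun x => γ i * x * γ i) ∘ γ = fun j => -(if j = i then -1 else 1 : ℂ) • γ j :=
    funext (gamma_mul_gamma_mul_gamma hrel i)
  rw [hconj, List.prod_map_smul, Finset.prod_map_sort, Finset.prod_neg,
    Finset.prod_ite_eq']

theorem transferE1_gammaProd (I : Finset (Fin n)) :
    transferE1 γ (gammaProd γ I) =
      (((-1 : ℂ)) ^ I.card * ((n : ℂ) - 2 * I.card) / n) • gammaProd γ I := by
  simp only [transferE1, gamma_mul_gammaProd_mul_gamma hrel, ← Finset.sum_smul, ← Finset.mul_sum,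
    Finset.sum_ite_mem_neg_one_one, Fintype.card_fin, smul_smul]
  ring_nf

theorem transferE1_one (hn : 0 < n) : transferE1 γ 1 = 1 := by
  have hn : (n : ℂ) ≠ 0 := Nat.cast_ne_zero.2 hn.ne'
  simpa [gammaProd_empty, hn] using transferE1_gammaProd hrel ∅

theorem transferE1_gamma0 (hn : 0 < n) (hev : Even n) : transferE1 γ (gamma0 γ) = -gamma0 γ := by
  have hn : (n : ℂ) ≠ 0 := Nat.cast_ne_zero.2 hn.ne'
  have heig : (-1 : ℂ) ^ n * ((n : ℂ) - 2 * n) / n = -1 := by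
    rw [hev.neg_one_pow]; field_simp; ring
  rw [gamma0_eq_smul_gammaProd_univ, transferE1_smul, transferE1_gammaProd hrel, Finset.card_univ,
    Fintype.card_fin, heig, smul_comm, neg_one_smul]

end TransferOperator

/-- Each basis element `γ_I` is an eigenvector of the SO(n) AKLT transfer
operator with eigenvalue `λ_I = (-1)^{|I|} (n - 2|I|)/n`; in particular
`E₁(1) = 1`, for even `n` also `E₁(γ₀) = -γ₀`, and `|λ_I| < 1` whenever
`0 < |I| < n`. -/
theorem son_aklt_transfer_operator_diagonalization
    {n N : ℕ} (hn : 0 < n)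
    (γ : Fin n → Matrix (Fin N) (Fin N) ℂ)
    (hrel : ∀ i j, γ i * γ j + γ j * γ i =
      if i = j then (2 : ℂ) • (1 : Matrix (Fin N) (Fin N) ℂ) else 0) :
    (∀ I : Finset (Fin n),
      transferE1 γ (gammaProd γ I) =
        (((-1 : ℂ)) ^ I.card * ((n : ℂ) - 2 * I.card) / n) • gammaProd γ I) ∧
    transferE1 γ 1 = 1 ∧
    (Even n → transferE1 γ (gamma0 γ) = -(gamma0 γ)) ∧
    (∀ I : Finset (Fin n), 0 < I.card → I.card < n →
      ‖((-1 : ℂ)) ^ I.card * ((n : ℂ) - 2 * I.card) / n‖ < 1) :=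
  ⟨transferE1_gammaProd hrel, transferE1_one hrel hn, transferE1_gamma0 hrel hn,
    fun _ => norm_neg_one_pow_mul_sub_two_mul_div_lt_one⟩
end

section
/- The SO(n) AKLT matrix product states ψ(B) = Σ_{i₁,…,i_ℓ} Tr(B γ_{i_ℓ}⋯γ_{i₁}) |i₁,…,i_ℓ⟩ are annihilated by each interaction term h_{x,x+1} = 1 + SWAP − 2Q, i.e. h_{x,x+1}·ψ(B) = 0 for all B in the Clifford algebra and all 1 ≤ x ≤ ℓ−1. -/
/-!
Near two adjacent sites `x₀, x₁` the coefficient factors as `Tr(B R γ_{i x₁} γ_{i x₀} L)` with `R`, `L`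
independent of the entries at `x₀, x₁`. The identity and SWAP terms therefore add up to the
anticommutator `Tr(B R {γ_{i x₁}, γ_{i x₀}} L) = 2 δ Tr(B R L)`, while each of the `n` summands of the
`Q` term equals `Tr(B R γ_j² L) = Tr(B R L)`.
-/

open Matrix

/-- The coefficient `Tr(B γ_{i_ℓ} ⋯ γ_{i₁})` of the SO(n) AKLT matrix product
state `ψ(B) = Σ_{i₁,…,i_ℓ} Tr(B γ_{i_ℓ} ⋯ γ_{i₁}) |i₁,…,i_ℓ⟩` in the tensor
basis of `(ℂⁿ)^{⊗ℓ}`. -/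
noncomputable def mpsCoeff {n N ℓ : ℕ} (γ : Fin n → Matrix (Fin N) (Fin N) ℂ)
    (B : Matrix (Fin N) (Fin N) ℂ) (i : Fin ℓ → Fin n) : ℂ :=
  Matrix.trace (B * ((List.ofFn fun k => γ (i k)).reverse).prod)

namespace List

variable {α : Type*} {ℓ : ℕ}

theorem ofFn_eq_take_append_cons_cons_drop (f : Fin ℓ → α) {x₀ x₁ : Fin ℓ}
    (hadj : (x₁ : ℕ) = x₀ + 1) :
    ofFn f = (ofFn f).take x₀ ++ f x₀ :: f x₁ :: (ofFn f).drop (x₁ + 1) := by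
  have h₀ : (x₀ : ℕ) < (ofFn f).length := by simp
  have h₁ : (x₁ : ℕ) < (ofFn f).length := by simp
  conv_lhs => rw [← take_append_drop x₀ (ofFn f), drop_eq_getElem_cons h₀, ← hadj,
    drop_eq_getElem_cons h₁]
  simp

theorem take_ofFn_congr {f g : Fin ℓ → α} {m : ℕ} (h : ∀ k : Fin ℓ, (k : ℕ) < m → f k = g k) :
    (ofFn f).take m = (ofFn g).take m :=
  ext_getElem (by simp) fun j hf _ => by
    simp only [length_take, length_ofFn, lt_inf_iff] at hf
    simpa using h ⟨j, hf.2⟩ hf.1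

theorem drop_ofFn_congr {f g : Fin ℓ → α} {m : ℕ} (h : ∀ k : Fin ℓ, m ≤ (k : ℕ) → f k = g k) :
    (ofFn f).drop m = (ofFn g).drop m :=
  ext_getElem (by simp) fun j hf _ => by
    simp only [length_drop, length_ofFn] at hf
    simpa using h ⟨m + j, by omega⟩ (Nat.le_add_right m j)

theorem exists_prod_reverse_ofFn_eq {M : Type*} [Monoid M] (f : Fin ℓ → M) {x₀ x₁ : Fin ℓ}
    (hadj : (x₁ : ℕ) = x₀ + 1) :
    ∃ L R : M, ∀ g : Fin ℓ → M, (∀ k, k ≠ x₀ → k ≠ x₁ → g k = f k) →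
      (ofFn g).reverse.prod = R * (g x₁ * g x₀) * L := by
  refine ⟨((ofFn f).take x₀).reverse.prod, ((ofFn f).drop (x₁ + 1)).reverse.prod,
    fun g hg => ?_⟩
  rw [ofFn_eq_take_append_cons_cons_drop g hadj,
    take_ofFn_congr fun k hk => hg k (Fin.ne_of_lt hk) (by omega),
    drop_ofFn_congr fun k hk => hg k (by omega) (by omega)]
  simp [mul_assoc]

end List

theorem exists_mpsCoeff_eq_trace_adjacent {n N ℓ : ℕ} (γ : Fin n → Matrix (Fin N) (Fin N) ℂ)
    (B : Matrix (Fin N) (Fin N) ℂ) (i : Fin ℓ → Fin n) {x₀ x₁ : Fin ℓ}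
    (hadj : (x₁ : ℕ) = x₀ + 1) :
    ∃ L R : Matrix (Fin N) (Fin N) ℂ, ∀ i' : Fin ℓ → Fin n,
      (∀ k, k ≠ x₀ → k ≠ x₁ → i' k = i k) →
      mpsCoeff γ B i' = trace (B * (R * (γ (i' x₁) * γ (i' x₀)) * L)) := by
  obtain ⟨L, R, h⟩ := List.exists_prod_reverse_ofFn_eq (fun k => γ (i k)) hadj
  exact ⟨L, R, fun i' hi' => by
    rw [mpsCoeff, h (fun k => γ (i' k)) fun k h₀ h₁ => by rw [hi' k h₀ h₁]]⟩

/-- The SO(n) AKLT matrix product states `ψ(B)` are annihilated by each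
interaction term `h_{x,x+1} = 1 + SWAP - 2Q` applied to two adjacent sites
`x₀, x₁` (with `x₁ = x₀ + 1`): written in tensor-basis coordinates, the
coefficient of `h_{x,x+1} ψ(B)` at every basis index `i` vanishes.  Here `SWAP`
exchanges the tensor factors `x₀, x₁` and `Q = |ξ⟩⟨ξ|` with
`ξ = (1/√n) Σⱼ |jj⟩` acts on the factors `x₀, x₁`. -/
theorem son_aklt_mps_are_ground_states
    {n N ℓ : ℕ}
    (γ : Fin n → Matrix (Fin N) (Fin N) ℂ)
    (hrel : ∀ i j, γ i * γ j + γ j * γ i =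
      if i = j then (2 : ℂ) • (1 : Matrix (Fin N) (Fin N) ℂ) else 0)
    (B : Matrix (Fin N) (Fin N) ℂ)
    (x₀ x₁ : Fin ℓ) (hadj : (x₁ : ℕ) = (x₀ : ℕ) + 1)
    (i : Fin ℓ → Fin n) :
    mpsCoeff γ B i
      + mpsCoeff γ B (i ∘ Equiv.swap x₀ x₁)
      - 2 * ((if i x₀ = i x₁ then (1 : ℂ) else 0) * (n : ℂ)⁻¹ *
          ∑ j : Fin n,
            mpsCoeff γ B (Function.update (Function.update i x₀ j) x₁ j)) = 0 := by
  have hne : x₀ ≠ x₁ := fun h => by simp [h] at hadj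
  have hn : (n : ℂ) ≠ 0 := Nat.cast_ne_zero.mpr (Fin.pos (i x₀)).ne'
  have hsq : ∀ j, γ j * γ j = 1 := fun j => smul_right_injective _ (two_ne_zero (α := ℂ)) <| by
    simpa [two_smul] using hrel j j
  obtain ⟨L, R, hLR⟩ := exists_mpsCoeff_eq_trace_adjacent γ B i hadj
  have hswap : mpsCoeff γ B (i ∘ Equiv.swap x₀ x₁) =
      trace (B * (R * (γ (i x₀) * γ (i x₁)) * L)) := by
    rw [hLR _ fun k h₀ h₁ => by simp [Equiv.swap_apply_of_ne_of_ne h₀ h₁]]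
    simp
  have hpair : ∀ j, mpsCoeff γ B (Function.update (Function.update i x₀ j) x₁ j) =
      trace (B * (R * L)) := fun j => by
    rw [hLR _ fun k h₀ h₁ => by simp [h₀, h₁]]
    simp [Function.update_of_ne hne, hsq]
  have hanticomm : trace (B * (R * (γ (i x₁) * γ (i x₀)) * L)) +
      trace (B * (R * (γ (i x₀) * γ (i x₁)) * L)) =
      if i x₁ = i x₀ then 2 * trace (B * (R * L)) else 0 := by
    rw [← trace_add, ← Matrix.mul_add, ← Matrix.add_mul, ← Matrix.mul_add, hrel]
    split_ifs <;> simp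
  rw [hLR i fun _ _ _ => rfl, hswap, Finset.sum_congr rfl fun j _ => hpair j, hanticomm]
  by_cases hab : i x₀ = i x₁
  · simp only [hab, ite_true, Finset.sum_const, Finset.card_univ, Fintype.card_fin, nsmul_eq_mul]
    field_simp
    ring
  · simp [hab, Ne.symm hab]
end
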